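/- Let λ be a strict partition and k ≥ 1, and for 0 ≤ j ≤ k−1 let m_j denote the number of parts of λ congruent to j modulo k. Then every standard shifted k-ribbon tableau of shape λ contains the same number of ribbons having a cell on the main diagonal, namely m_0 + Σ_{1 ≤ i < k/2} min(m_i, m_{k−i}); this common number is called the k-length ℓ^{(k)}(λ) of λ. -/

import Mathlib

def IsStrictPartition (s : Finset ℕ) : Prop := ∀ x ∈ s, 0 < x

/-- The `i`-th largest part of `s` (1-indexed); `0` if out of range. -/
def nthPart (s : Finset ℕ) (i : ℕ) : ℕ := (s.sort (· ≤ ·)).reverse.getD (i - 1) 0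

/-- The shifted diagram: row `i` (1-indexed) has cells `(i, j)` with `i ≤ j ≤ i + λᵢ - 1`. -/
def shiftedDiagram (s : Finset ℕ) : Set (ℕ × ℕ) :=
  {c | 1 ≤ c.1 ∧ c.1 ≤ c.2 ∧ c.2 + 1 ≤ c.1 + nthPart s c.1}

def skewDiag (lam nu : Finset ℕ) : Set (ℕ × ℕ) := shiftedDiagram lam \ shiftedDiagram nu

/-- Diagonal value `j - i + 1` of a cell `(i, j)`. -/
def diagVal (c : ℕ × ℕ) : ℕ := c.2 + 1 - c.1

def CellAdj (c d : ℕ × ℕ) : Prop :=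
  (c.1 = d.1 ∧ (c.2 + 1 = d.2 ∨ d.2 + 1 = c.2)) ∨
  (c.2 = d.2 ∧ (c.1 + 1 = d.1 ∨ d.1 + 1 = c.1))

def EdgeConnected (S : Set (ℕ × ℕ)) : Prop :=
  ∀ c ∈ S, ∀ d ∈ S, Relation.ReflTransGen (fun x y => CellAdj x y ∧ x ∈ S ∧ y ∈ S) c d

def IsHead (S : Set (ℕ × ℕ)) (c : ℕ × ℕ) : Prop :=
  c ∈ S ∧ ∀ d ∈ S, diagVal d ≤ diagVal c

def IsTail (S : Set (ℕ × ℕ)) (c : ℕ × ℕ) : Prop :=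
  c ∈ S ∧ ∀ d ∈ S, diagVal c ≤ diagVal d

def IsRemovableSingleRibbon (lam nu : Finset ℕ) (k : ℕ) : Prop :=
  IsStrictPartition lam ∧ IsStrictPartition nu ∧
  shiftedDiagram nu ⊆ shiftedDiagram lam ∧
  (skewDiag lam nu).ncard = k ∧
  EdgeConnected (skewDiag lam nu) ∧
  Set.InjOn diagVal (skewDiag lam nu)

def IsDoubleDecomp (lam nu : Finset ℕ) (R S : Set (ℕ × ℕ)) : Prop :=
  IsStrictPartition lam ∧ IsStrictPartition nu ∧
  shiftedDiagram nu ⊆ shiftedDiagram lam ∧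
  Disjoint R S ∧ R ∪ S = skewDiag lam nu ∧
  R.Nonempty ∧ EdgeConnected R ∧ Set.InjOn diagVal R ∧
  S.Nonempty ∧ EdgeConnected S ∧ Set.InjOn diagVal S ∧
  S.ncard ≤ R.ncard ∧
  (∃ a, IsTail R (a, a)) ∧ (∃ b, IsTail S (b, b)) ∧
  (∃ mu : Finset ℕ, IsStrictPartition mu ∧ shiftedDiagram mu = shiftedDiagram lam \ R)

def IsRemovableDoubleRibbon (lam nu : Finset ℕ) (k : ℕ) : Prop :=
  (skewDiag lam nu).ncard = k ∧ ∃ R S, IsDoubleDecomp lam nu R S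

def IsRemovableRibbon (lam nu : Finset ℕ) (k : ℕ) : Prop :=
  IsRemovableSingleRibbon lam nu k ∨ IsRemovableDoubleRibbon lam nu k

/-- A standard shifted `k`-ribbon tableau of shape `λ`, as a chain
`f 0 ⊂ f 1 ⊂ ⋯ ⊂ f n = λ` in which `f 0` is a `k`-core (admits no removable `k`-ribbon)
and each `f (i+1) ∖ f i` is a removable `k`-ribbon. -/
def IsStandardRibbonTableau (k : ℕ) (lam : Finset ℕ) (n : ℕ) (f : ℕ → Finset ℕ) : Prop :=
  IsStrictPartition (f 0) ∧ (¬∃ nu : Finset ℕ, IsRemovableRibbon (f 0) nu k) ∧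
  f n = lam ∧ ∀ i < n, IsRemovableRibbon (f (i + 1)) (f i) k

/-!
Read the shifted diagram diagonal by diagonal: row `i` reaches diagonal `d` iff at least `i`
parts are `≥ d`. In these terms a single `k`-ribbon occupying diagonals `b+1, …, b+k` is exactly
the move replacing the part `b + k` by `b` (deleting it when `b = 0`), and a double ribbon deletes
two parts `p > q` with `p + q = k`. A single ribbon meets the main diagonal iff `b = 0`, in which
case `m₀` drops by one; otherwise no residue count changes. A double ribbon always meets the
diagonal and lowers `min (m_q, m_{k-q})` by one and nothing else. Hence `ℓ^{(k)}` drops by one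
exactly at the ribbons meeting the diagonal, and it vanishes on a `k`-core: there no part is
`≡ 0`, and every residue class present contains a part `< k`, so `i` and `k - i` cannot both occur.
-/

def numPartsGe (s : Finset ℕ) (d : ℕ) : ℕ := (s.filter (d ≤ ·)).card

lemma numPartsGe_eq_succ_add (s : Finset ℕ) (d : ℕ) :
    numPartsGe s d = numPartsGe s (d + 1) + if d ∈ s then 1 else 0 := by
  simp only [numPartsGe, Finset.card_filter, ← Finset.sum_ite_eq' s d (fun _ => 1),
    ← Finset.sum_add_distrib]
  refine Finset.sum_congr rfl fun x _ => ?_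
  split_ifs <;> omega

lemma numPartsGe_antitone (s : Finset ℕ) : Antitone (numPartsGe s) :=
  fun _ _ hde => Finset.card_le_card (Finset.monotone_filter_right s fun _ _ => hde.trans)

lemma numPartsGe_insert {s : Finset ℕ} {a : ℕ} (ha : a ∉ s) (d : ℕ) :
    numPartsGe (insert a s) d = numPartsGe s d + if d ≤ a then 1 else 0 := by
  unfold numPartsGe
  rw [Finset.filter_insert]
  split_ifs
  · exact Finset.card_insert_of_notMem fun h => ha (Finset.mem_filter.mp h).1
  · rfl

lemma numPartsGe_erase {s : Finset ℕ} {a : ℕ} (ha : a ∈ s) (d : ℕ) :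
    numPartsGe s d = numPartsGe (s.erase a) d + if d ≤ a then 1 else 0 := by
  conv_lhs => rw [← Finset.insert_erase ha]
  exact numPartsGe_insert (Finset.notMem_erase a s) d

lemma le_getD_iff_lt_length_filter {l : List ℕ} (hl : l.Pairwise (· ≥ ·)) {m : ℕ} (hm : 0 < m)
    (i : ℕ) : m ≤ l.getD i 0 ↔ i < (l.filter (m ≤ ·)).length := by
  induction l generalizing i with
  | nil =>
    simp only [List.getD_nil, List.filter_nil, List.length_nil, Nat.not_lt_zero, iff_false]
    omega
  | cons x l ih =>
    obtain ⟨hx, hl⟩ := List.pairwise_cons.mp hl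
    by_cases hmx : m ≤ x
    · cases i with
      | zero => simp [hmx]
      | succ i =>
        rw [List.getD_cons_succ, ih hl]
        simp [hmx]
    · have hlt : ∀ y ∈ x :: l, y < m := fun y hy => by
        rcases List.mem_cons.mp hy with rfl | hy
        · omega
        · exact lt_of_le_of_lt (hx y hy) (by omega)
      have hget : (x :: l).getD i 0 < m := by
        rw [List.getD_eq_getElem?_getD]
        cases h : (x :: l)[i]? with
        | none => simpa
        | some y => exact hlt y (List.mem_of_getElem? h)
      rw [List.filter_eq_nil_iff.mpr fun y hy => by simpa using hlt y hy]
      simpa using hget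

lemma length_filter_sort (s : Finset ℕ) (p : ℕ → Prop) [DecidablePred p] :
    ((s.sort (· ≤ ·)).filter (p ·)).length = (s.filter p).card := by
  rw [Finset.card_def, Finset.filter_val, ← Finset.sort_eq s (· ≤ ·), Multiset.filter_coe,
    Multiset.coe_card]

lemma le_nthPart_iff (s : Finset ℕ) {i m : ℕ} (hi : 1 ≤ i) (hm : 1 ≤ m) :
    m ≤ nthPart s i ↔ i ≤ numPartsGe s m := by
  rw [nthPart, le_getD_iff_lt_length_filter
    (List.pairwise_reverse.2 (s.pairwise_sort (· ≤ ·))) hm, List.filter_reverse,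
    List.length_reverse, length_filter_sort s (m ≤ ·), numPartsGe]
  omega

lemma mem_shiftedDiagram_iff {s : Finset ℕ} {c : ℕ × ℕ} :
    c ∈ shiftedDiagram s ↔ 1 ≤ c.1 ∧ c.1 ≤ c.2 ∧ c.1 ≤ numPartsGe s (diagVal c) := by
  obtain ⟨i, j⟩ := c
  simp only [shiftedDiagram, diagVal, Set.mem_ofPred_eq]
  constructor
  · rintro ⟨hi, hij, h⟩
    exact ⟨hi, hij, (le_nthPart_iff s hi (by omega)).1 (by omega)⟩
  · rintro ⟨hi, hij, h⟩
    have := (le_nthPart_iff s hi (by omega)).2 h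
    exact ⟨hi, hij, by omega⟩

lemma mem_skewDiag_iff {μ ν : Finset ℕ} {c : ℕ × ℕ} :
    c ∈ skewDiag μ ν ↔ 1 ≤ c.1 ∧ c.1 ≤ c.2 ∧
      numPartsGe ν (diagVal c) < c.1 ∧ c.1 ≤ numPartsGe μ (diagVal c) := by
  simp only [skewDiag, Set.mem_sdiff, mem_shiftedDiagram_iff]
  omega

lemma shiftedDiagram_finite (s : Finset ℕ) : (shiftedDiagram s).Finite := by
  set N := s.card + s.sup id
  refine ((Set.finite_Iic N).prod (Set.finite_Iic N)).subset fun c hc => ?_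
  rw [mem_shiftedDiagram_iff] at hc
  have hdiag : diagVal c = c.2 + 1 - c.1 := rfl
  have hcard : numPartsGe s (diagVal c) ≤ s.card := Finset.card_filter_le _ _
  obtain ⟨x, hx⟩ := Finset.card_pos.mp (show 0 < numPartsGe s (diagVal c) by omega)
  have hxN : x ≤ s.sup id := Finset.le_sup (f := id) (Finset.mem_filter.mp hx).1
  have := (Finset.mem_filter.mp hx).2
  simp only [Set.mem_prod, Set.mem_Iic]
  omega

lemma skewDiag_finite (μ ν : Finset ℕ) : (skewDiag μ ν).Finite :=
  (shiftedDiagram_finite μ).subset Set.sdiff_subset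

lemma IsStrictPartition.zero_notMem {s : Finset ℕ} (h : IsStrictPartition s) : 0 ∉ s :=
  fun h0 => Nat.lt_irrefl 0 (h 0 h0)

lemma IsStrictPartition.erase {s : Finset ℕ} (h : IsStrictPartition s) (a : ℕ) :
    IsStrictPartition (s.erase a) :=
  fun x hx => h x (Finset.mem_of_mem_erase hx)

lemma IsStrictPartition.insert {s : Finset ℕ} (h : IsStrictPartition s) {a : ℕ} (ha : 0 < a) :
    IsStrictPartition (insert a s) := by
  intro x hx
  rcases Finset.mem_insert.mp hx with rfl | hx
  exacts [ha, h x hx]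

def lowestDiagCell (s : Finset ℕ) (d : ℕ) : ℕ × ℕ := (numPartsGe s d, numPartsGe s d + d - 1)

lemma diagVal_lowestDiagCell (s : Finset ℕ) {d : ℕ} (hd : 1 ≤ d) :
    diagVal (lowestDiagCell s d) = d := by
  simp only [diagVal, lowestDiagCell]
  omega

lemma injOn_lowestDiagCell (s : Finset ℕ) {D : Set ℕ} (hD : ∀ d ∈ D, 1 ≤ d) :
    Set.InjOn (lowestDiagCell s) D := fun x hx y hy hxy => by
  simpa only [diagVal_lowestDiagCell s (hD x hx), diagVal_lowestDiagCell s (hD y hy)]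
    using congrArg diagVal hxy

lemma lowestDiagCell_mem_skewDiag {μ ν : Finset ℕ} {d : ℕ} (hd : 1 ≤ d)
    (h : numPartsGe ν d < numPartsGe μ d) : lowestDiagCell μ d ∈ skewDiag μ ν := by
  rw [mem_skewDiag_iff, diagVal_lowestDiagCell μ hd]
  simp only [lowestDiagCell]
  omega

lemma cellAdj_lowestDiagCell (s : Finset ℕ) {d : ℕ} (hd : 1 ≤ numPartsGe s (d + 1)) :
    CellAdj (lowestDiagCell s d) (lowestDiagCell s (d + 1)) := by
  have := numPartsGe_eq_succ_add s d
  simp only [CellAdj, lowestDiagCell]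
  split_ifs at this <;> omega

lemma shiftedDiagram_subset_iff {μ ν : Finset ℕ} :
    shiftedDiagram ν ⊆ shiftedDiagram μ ↔ ∀ d, 1 ≤ d → numPartsGe ν d ≤ numPartsGe μ d := by
  constructor
  · intro h d hd
    by_contra hlt
    have hcell : lowestDiagCell ν d ∈ skewDiag ν μ :=
      lowestDiagCell_mem_skewDiag hd (by omega)
    exact hcell.2 (h hcell.1)
  · intro h c hc
    rw [mem_shiftedDiagram_iff] at hc ⊢
    have := h (diagVal c) (by simp only [diagVal]; omega)
    omega

lemma numPartsGe_le_succ_of_injOn {μ ν : Finset ℕ} (h : Set.InjOn diagVal (skewDiag μ ν))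
    {d : ℕ} (hd : 1 ≤ d) : numPartsGe μ d ≤ numPartsGe ν d + 1 := by
  by_contra hlt
  set r := numPartsGe μ d
  have mem : ∀ i, numPartsGe ν d < i → i ≤ r → (i, i + d - 1) ∈ skewDiag μ ν := fun i hi hir => by
    rw [mem_skewDiag_iff, show diagVal (i, i + d - 1) = d by simp only [diagVal]; omega]
    omega
  have := h (mem r (by omega) le_rfl) (mem (r - 1) (by omega) (by omega))
    (by simp only [diagVal]; omega)
  simp only [Prod.mk.injEq] at this
  omega

lemma skewDiag_eq_image {μ ν : Finset ℕ}
    (h : ∀ d, 1 ≤ d → numPartsGe μ d ≤ numPartsGe ν d + 1) :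
    skewDiag μ ν = lowestDiagCell μ '' {d | 1 ≤ d ∧ numPartsGe ν d < numPartsGe μ d} := by
  ext c
  constructor
  · intro hc
    rw [mem_skewDiag_iff] at hc
    have hd : 1 ≤ diagVal c := by simp only [diagVal]; omega
    have := h _ hd
    refine ⟨diagVal c, ⟨hd, by omega⟩, ?_⟩
    obtain ⟨i, j⟩ := c
    simp only [lowestDiagCell, diagVal, Prod.mk.injEq] at this hc ⊢
    omega
  · rintro ⟨d, ⟨hd, hlt⟩, rfl⟩
    exact lowestDiagCell_mem_skewDiag hd hlt

lemma cellAdj_comm {c d : ℕ × ℕ} : CellAdj c d ↔ CellAdj d c := by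
  unfold CellAdj
  omega

lemma diagVal_of_cellAdj {c d : ℕ × ℕ} (h : CellAdj c d) (hc : c.1 ≤ c.2) (hd : d.1 ≤ d.2) :
    diagVal d = diagVal c + 1 ∨ diagVal c = diagVal d + 1 := by
  unfold CellAdj at h
  unfold diagVal
  omega

lemma uIcc_subset_image_diagVal {S : Set (ℕ × ℕ)} (hS : ∀ c ∈ S, c.1 ≤ c.2) {c d : ℕ × ℕ}
    (hc : c ∈ S) (h : Relation.ReflTransGen (fun x y => CellAdj x y ∧ x ∈ S ∧ y ∈ S) c d) :
    Set.uIcc (diagVal c) (diagVal d) ⊆ diagVal '' S := by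
  induction h with
  | refl =>
    rw [Set.uIcc_self, Set.singleton_subset_iff]
    exact ⟨c, hc, rfl⟩
  | @tail x y _ hxy ih =>
    intro e he
    by_cases hex : e ∈ Set.uIcc (diagVal c) (diagVal x)
    · exact ih hex
    · have := diagVal_of_cellAdj hxy.1 (hS x hxy.2.1) (hS y hxy.2.2)
      simp only [Set.mem_uIcc] at he hex
      exact ⟨y, hxy.2.2, by omega⟩

lemma EdgeConnected.ordConnected_image_diagVal {S : Set (ℕ × ℕ)} (h : EdgeConnected S)
    (hS : ∀ c ∈ S, c.1 ≤ c.2) : (diagVal '' S).OrdConnected :=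
  Set.ordConnected_iff_uIcc_subset.2 <| by
    rintro _ ⟨c, hc, rfl⟩ _ ⟨d, hd, rfl⟩
    exact uIcc_subset_image_diagVal hS hc (h c hc d hd)

lemma edgeConnected_image_Ioc {g : ℕ → ℕ × ℕ} {a b : ℕ}
    (hg : ∀ d, b < d → d < a → CellAdj (g d) (g (d + 1))) : EdgeConnected (g '' Set.Ioc b a) := by
  rintro _ ⟨d₁, hd₁, rfl⟩ _ ⟨d₂, hd₂, rfl⟩
  simp only [Set.mem_Ioc] at hd₁ hd₂
  have mem : ∀ d, b < d → d ≤ a → g d ∈ g '' Set.Ioc b a := fun d h₁ h₂ => ⟨d, ⟨h₁, h₂⟩, rfl⟩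
  have : Relation.ReflTransGen (fun i j => CellAdj (g i) (g j) ∧
      g i ∈ g '' Set.Ioc b a ∧ g j ∈ g '' Set.Ioc b a) d₁ d₂ := by
    refine reflTransGen_of_succ _ (fun i hi => ?_) (fun i hi => ?_)
    all_goals
      simp only [Set.mem_Ico, Order.succ_eq_add_one] at hi ⊢
      have := hg i (by omega) (by omega)
      exact ⟨by first | exact this | exact cellAdj_comm.1 this,
        mem _ (by omega) (by omega), mem _ (by omega) (by omega)⟩
  exact this.lift g fun _ _ h => h

lemma exists_eq_Ioc_of_ordConnected {D : Set ℕ} (hD : D.OrdConnected) (hne : D.Nonempty)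
    (hbdd : BddAbove D) (h0 : 0 ∉ D) : ∃ b a, D = Set.Ioc b a := by
  rw [hne.ordConnected_iff_of_bdd (OrderBot.bddBelow D) hbdd] at hD
  have hpos : 0 < sInf D := Nat.pos_of_ne_zero fun h => h0 (h ▸ Nat.sInf_mem hne)
  refine ⟨sInf D - 1, sSup D, ?_⟩
  conv_lhs => rw [hD]
  ext d
  simp only [Set.mem_Icc, Set.mem_Ioc]
  omega

/-- `nu` is `lam` with its part `a` replaced by `b` (deleted if `b = 0`), expressed through part
counts: then `lam ∖ nu` consists of the lowest cells of the diagonals `b + 1, …, a`. -/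
def LowersPart (lam nu : Finset ℕ) (a b : ℕ) : Prop :=
  b < a ∧ ∀ d, 1 ≤ d → numPartsGe lam d = numPartsGe nu d + if b < d ∧ d ≤ a then 1 else 0

namespace LowersPart

variable {μ ν : Finset ℕ} {a b : ℕ}

lemma setOf_eq_Ioc (h : LowersPart μ ν a b) :
    {d | 1 ≤ d ∧ numPartsGe ν d < numPartsGe μ d} = Set.Ioc b a := by
  ext d
  simp only [Set.mem_ofPred_eq, Set.mem_Ioc]
  constructor
  · rintro ⟨hd, hlt⟩
    have := h.2 d hd
    split_ifs at this with hw
    · exact hw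
    · omega
  · rintro ⟨hbd, hda⟩
    have := h.2 d (by omega)
    rw [if_pos ⟨hbd, hda⟩] at this
    omega

lemma skewDiag_eq (h : LowersPart μ ν a b) :
    skewDiag μ ν = lowestDiagCell μ '' Set.Ioc b a := by
  rw [skewDiag_eq_image fun d hd => ?_, h.setOf_eq_Ioc]
  have := h.2 d hd
  split_ifs at this <;> omega

lemma shiftedDiagram_subset (h : LowersPart μ ν a b) : shiftedDiagram ν ⊆ shiftedDiagram μ :=
  shiftedDiagram_subset_iff.2 fun d hd => by
    have := h.2 d hd
    omega

lemma isRemovableSingleRibbon (hμ : IsStrictPartition μ) (hν : IsStrictPartition ν)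
    (h : LowersPart μ ν a b) : IsRemovableSingleRibbon μ ν (a - b) := by
  have hpos : 1 ≤ numPartsGe μ a := by
    have := h.1
    have := h.2 a (by omega)
    rw [if_pos (show b < a ∧ a ≤ a by omega)] at this
    omega
  refine ⟨hμ, hν, h.shiftedDiagram_subset, ?_, ?_, ?_⟩ <;> rw [h.skewDiag_eq]
  · rw [(injOn_lowestDiagCell μ fun d hd => by exact Nat.one_le_of_lt hd.1).ncard_image,
      Set.ncard_Ioc_nat]
  · exact edgeConnected_image_Ioc fun d _ hda =>
      cellAdj_lowestDiagCell μ (hpos.trans (numPartsGe_antitone μ hda))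
  · rintro _ ⟨x, hx, rfl⟩ _ ⟨y, hy, rfl⟩ hxy
    rw [diagVal_lowestDiagCell μ (Nat.one_le_of_lt hx.1),
      diagVal_lowestDiagCell μ (Nat.one_le_of_lt hy.1)] at hxy
    rw [hxy]

lemma exists_diag_mem_skewDiag_iff (h : LowersPart μ ν a b) :
    (∃ j, (j, j) ∈ skewDiag μ ν) ↔ b = 0 := by
  have h1 := h.2 1 le_rfl
  have hdiag : ∀ j, diagVal (j, j) = 1 := fun j => by simp [diagVal]
  simp only [mem_skewDiag_iff, hdiag]
  constructor
  · rintro ⟨j, hj⟩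
    split_ifs at h1 <;> omega
  · intro hb
    have := h.1
    rw [if_pos (show b < 1 ∧ 1 ≤ a by omega)] at h1
    exact ⟨numPartsGe μ 1, by omega⟩

lemma isTail_skewDiag (h : LowersPart μ ν a 0) :
    IsTail (skewDiag μ ν) (numPartsGe μ 1, numPartsGe μ 1) := by
  rw [h.skewDiag_eq]
  refine ⟨⟨1, ⟨Nat.zero_lt_one, h.1⟩, by simp [lowestDiagCell]⟩, ?_⟩
  rintro _ ⟨d, hd, rfl⟩
  rw [diagVal_lowestDiagCell μ hd.1]
  simp only [diagVal, Set.mem_Ioc] at hd ⊢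
  omega

lemma ite_mem_add (h : LowersPart μ ν a b) {d : ℕ} (hd : 1 ≤ d) :
    ((if d ∈ μ then 1 else 0) + if d = b then 1 else 0) =
      (if d ∈ ν then 1 else 0) + if d = a then 1 else 0 := by
  have := numPartsGe_eq_succ_add μ d
  have := numPartsGe_eq_succ_add ν d
  have := h.2 d hd
  have := h.2 (d + 1) (by omega)
  have := h.1
  split_ifs at * <;> omega

lemma eq_insert (hμ : IsStrictPartition μ) (hν : IsStrictPartition ν) (h : LowersPart μ ν a 0) :
    μ = insert a ν ∧ a ∉ ν := by
  have ha := h.1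
  have key := fun d (hd : 1 ≤ d) => h.ite_mem_add hd
  refine ⟨Finset.ext fun d => ?_, fun haν => by
    have := key a ha
    split_ifs at this <;> simp_all⟩
  rw [Finset.mem_insert]
  rcases Nat.eq_zero_or_pos d with rfl | hd
  · simp [hμ.zero_notMem, hν.zero_notMem, ha.ne]
  · have := key d hd
    split_ifs at this <;> simp_all

lemma insert_eq_insert (hμ : IsStrictPartition μ) (hν : IsStrictPartition ν)
    (h : LowersPart μ ν a b) (hb : 0 < b) : insert b μ = insert a ν ∧ b ∉ μ ∧ a ∉ ν := by
  have ha := h.1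
  have key := fun d (hd : 1 ≤ d) => h.ite_mem_add hd
  have hbμ : b ∉ μ := fun hbμ => by
    have := key b hb
    split_ifs at this <;> simp_all
  have haν : a ∉ ν := fun haν => by
    have := key a (by omega)
    split_ifs at this <;> simp_all
  refine ⟨Finset.ext fun d => ?_, hbμ, haν⟩
  simp only [Finset.mem_insert]
  rcases Nat.eq_zero_or_pos d with rfl | hd
  · simp [hμ.zero_notMem, hν.zero_notMem, hb.ne, (hb.trans ha).ne]
  · have := key d hd
    split_ifs at this <;> simp_all

end LowersPart

lemma lowersPart_erase {μ : Finset ℕ} {a : ℕ} (ha : a ∈ μ) (ha₀ : 0 < a) :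
    LowersPart μ (μ.erase a) a 0 :=
  ⟨ha₀, fun d hd => by
    rw [numPartsGe_erase ha d]
    split_ifs <;> omega⟩

lemma lowersPart_insert_erase {μ : Finset ℕ} {a b : ℕ} (ha : a ∈ μ) (hb : b ∉ μ) (hba : b < a) :
    LowersPart μ (insert b (μ.erase a)) a b :=
  ⟨hba, fun d hd => by
    rw [numPartsGe_erase ha d, numPartsGe_insert (fun h => hb (Finset.mem_of_mem_erase h))]
    split_ifs <;> omega⟩

lemma IsRemovableSingleRibbon.exists_lowersPart {μ ν : Finset ℕ} {k : ℕ} (hk : 1 ≤ k)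
    (h : IsRemovableSingleRibbon μ ν k) : ∃ b, LowersPart μ ν (b + k) b := by
  obtain ⟨-, -, hsub, hcard, hconn, hinj⟩ := h
  have hle := shiftedDiagram_subset_iff.1 hsub
  have hle₁ := fun d (hd : 1 ≤ d) => numPartsGe_le_succ_of_injOn hinj hd
  set D := {d | 1 ≤ d ∧ numPartsGe ν d < numPartsGe μ d} with hD
  have hskew : skewDiag μ ν = lowestDiagCell μ '' D := skewDiag_eq_image hle₁
  have hcardD : D.ncard = k := by
    rw [← hcard, hskew, (injOn_lowestDiagCell μ fun d hd => hd.1).ncard_image]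
  have hord : D.OrdConnected := by
    have hdiag : diagVal '' skewDiag μ ν = D := by
      rw [hskew, Set.image_image]
      exact (Set.image_congr fun d hd => diagVal_lowestDiagCell μ hd.1).trans (Set.image_id D)
    rw [← hdiag]
    exact hconn.ordConnected_image_diagVal fun c hc => (mem_skewDiag_iff.1 hc).2.1
  obtain ⟨b, a, hDba⟩ := exists_eq_Ioc_of_ordConnected hord
    (Set.nonempty_of_ncard_ne_zero (by omega))
    (Set.finite_of_ncard_ne_zero (by omega)).bddAbove (fun h0 => by simp [D] at h0)
  have hab : a = b + k := by
    rw [hDba, Set.ncard_Ioc_nat] at hcardD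
    omega
  refine ⟨b, by omega, fun d hd => ?_⟩
  have hmem : d ∈ D ↔ d ∈ Set.Ioc b (b + k) := by rw [hDba, hab]
  have := hle d hd
  have := hle₁ d hd
  simp only [hD, Set.mem_ofPred_eq, Set.mem_Ioc] at hmem
  split_ifs with hw
  · have := hmem.2 hw
    omega
  · have := mt hmem.1 hw
    omega

def residueCount (k : ℕ) (s : Finset ℕ) (j : ℕ) : ℕ := (s.filter (fun p => p % k = j)).card

def kLength (k : ℕ) (s : Finset ℕ) : ℕ :=
  residueCount k s 0 + ∑ i ∈ (Finset.Ico 1 k).filter (fun i => 2 * i < k),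
    min (residueCount k s i) (residueCount k s (k - i))

lemma residueCount_insert {s : Finset ℕ} {a : ℕ} (ha : a ∉ s) (k j : ℕ) :
    residueCount k (insert a s) j = residueCount k s j + if a % k = j then 1 else 0 := by
  unfold residueCount
  rw [Finset.filter_insert]
  split_ifs
  · exact Finset.card_insert_of_notMem fun h => ha (Finset.mem_filter.mp h).1
  · rfl

lemma kLength_eq_of_insert_eq_insert {s t : Finset ℕ} {a b k : ℕ} (ha : a ∉ s) (hb : b ∉ t)
    (h : insert a s = insert b t) (hab : a % k = b % k) : kLength k s = kLength k t := by
  have hcount : ∀ j, residueCount k s j = residueCount k t j := fun j => by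
    have := residueCount_insert ha k j
    rw [h, residueCount_insert hb, hab] at this
    omega
  simp only [kLength, hcount]

lemma kLength_insert_of_mod_eq_zero {s : Finset ℕ} {a k : ℕ} (ha : a ∉ s) (h : a % k = 0) :
    kLength k (insert a s) = kLength k s + 1 := by
  simp only [kLength, residueCount_insert ha, h, if_true]
  have hsum : ∀ i ∈ (Finset.Ico 1 k).filter (fun i => 2 * i < k),
      min (residueCount k s i + if 0 = i then 1 else 0)
        (residueCount k s (k - i) + if 0 = k - i then 1 else 0) =
      min (residueCount k s i) (residueCount k s (k - i)) := fun i hi => by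
    simp only [Finset.mem_filter, Finset.mem_Ico] at hi
    rw [if_neg (by omega), if_neg (by omega), add_zero, add_zero]
  rw [Finset.sum_congr rfl hsum]
  omega

lemma kLength_insert_insert {s : Finset ℕ} {p q k : ℕ} (hq : q ∉ s) (hp : p ∉ insert q s)
    (hq₀ : 0 < q) (hqp : q < p) (hpq : p + q = k) :
    kLength k (insert p (insert q s)) = kLength k s + 1 := by
  set I := (Finset.Ico 1 k).filter (fun i => 2 * i < k)
  have hcount : ∀ j, residueCount k (insert p (insert q s)) j =
      residueCount k s j + (if j = p then 1 else 0) + if j = q then 1 else 0 := fun j => by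
    rw [residueCount_insert hp, residueCount_insert hq, Nat.mod_eq_of_lt (by omega : p < k),
      Nat.mod_eq_of_lt (by omega : q < k)]
    simp only [eq_comm]
    omega
  have hqI : q ∈ I := by
    simp only [I, Finset.mem_filter, Finset.mem_Ico]
    omega
  have hsum : ∀ i ∈ I.erase q,
      min (residueCount k (insert p (insert q s)) i)
        (residueCount k (insert p (insert q s)) (k - i)) =
      min (residueCount k s i) (residueCount k s (k - i)) := fun i hi => by
    simp only [I, Finset.mem_erase, Finset.mem_filter, Finset.mem_Ico] at hi
    rw [hcount, hcount, if_neg (by omega), if_neg (by omega), if_neg (by omega),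
      if_neg (by omega)]
    simp only [add_zero]
  have hcount₀ := hcount 0
  have hcount_q := hcount q
  have hcount_p := hcount (k - q)
  rw [if_neg (by omega), if_neg (by omega)] at hcount₀
  rw [if_neg (by omega), if_pos rfl] at hcount_q
  rw [if_pos (by omega), if_neg (by omega)] at hcount_p
  unfold kLength
  rw [← Finset.add_sum_erase I _ hqI, ← Finset.add_sum_erase I _ hqI, Finset.sum_congr rfl hsum,
    hcount₀, hcount_q, hcount_p]
  omega

open Classical in
lemma IsRemovableSingleRibbon.kLength_eq {μ ν : Finset ℕ} {k : ℕ} (hk : 1 ≤ k)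
    (h : IsRemovableSingleRibbon μ ν k) :
    kLength k μ = kLength k ν + if ∃ j, (j, j) ∈ skewDiag μ ν then 1 else 0 := by
  obtain ⟨b, hlow⟩ := h.exists_lowersPart hk
  rw [if_congr hlow.exists_diag_mem_skewDiag_iff rfl rfl]
  rcases Nat.eq_zero_or_pos b with rfl | hb
  · rw [zero_add] at hlow
    obtain ⟨hμ, hkν⟩ := hlow.eq_insert h.1 h.2.1
    rw [hμ, kLength_insert_of_mod_eq_zero hkν (Nat.mod_self k), if_pos rfl]
  · obtain ⟨heq, hbμ, hbkν⟩ := hlow.insert_eq_insert h.1 h.2.1 hb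
    rw [kLength_eq_of_insert_eq_insert hbμ hbkν heq (Nat.add_mod_right b k).symm,
      if_neg hb.ne', add_zero]

lemma IsRemovableSingleRibbon.eq_insert_of_diag_mem {μ ν : Finset ℕ} {k j : ℕ} (hk : 1 ≤ k)
    (h : IsRemovableSingleRibbon μ ν k) (hj : (j, j) ∈ skewDiag μ ν) : μ = insert k ν ∧ k ∉ ν := by
  obtain ⟨b, hlow⟩ := h.exists_lowersPart hk
  obtain rfl := hlow.exists_diag_mem_skewDiag_iff.1 ⟨j, hj⟩
  simpa using hlow.eq_insert h.1 h.2.1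

lemma IsDoubleDecomp.exists_eq_insert_insert {μ ν : Finset ℕ} {R S : Set (ℕ × ℕ)}
    (h : IsDoubleDecomp μ ν R S) : ∃ p q, 0 < q ∧ q < p ∧ p + q = (skewDiag μ ν).ncard ∧
      q ∉ ν ∧ p ∉ insert q ν ∧ μ = insert p (insert q ν) := by
  obtain ⟨hμ, hν, hsub, hdisj, hunion, hRne, hRconn, hRinj, hSne, hSconn, hSinj, hSR,
    ⟨a, haR, -⟩, ⟨b, hbS, -⟩, μ', hμ', hμ'eq⟩ := h
  have hRsub : R ⊆ skewDiag μ ν := hunion ▸ Set.subset_union_left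
  have hSsub : S ⊆ skewDiag μ ν := hunion ▸ Set.subset_union_right
  have hRfin := (skewDiag_finite μ ν).subset hRsub
  have hSfin := (skewDiag_finite μ ν).subset hSsub
  have hcard : R.ncard + S.ncard = (skewDiag μ ν).ncard := by
    rw [← hunion, Set.ncard_union_eq hdisj hRfin hSfin]
  have hμ'sub : shiftedDiagram μ' ⊆ shiftedDiagram μ := hμ'eq ▸ Set.sdiff_subset
  have hνsub : shiftedDiagram ν ⊆ shiftedDiagram μ' :=
    hμ'eq ▸ fun x hx => ⟨hsub hx, fun hxR => (hRsub hxR).2 hx⟩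
  have hR : R = skewDiag μ μ' := by
    rw [skewDiag, hμ'eq, Set.sdiff_sdiff_cancel_left (hRsub.trans Set.sdiff_subset)]
  have hS : S = skewDiag μ' ν := by
    rw [skewDiag, hμ'eq, sdiff_right_comm, ← skewDiag, ← hunion, Set.union_sdiff_left,
      hdisj.symm.sdiff_eq_left]
  have hRrib : IsRemovableSingleRibbon μ μ' R.ncard := by
    subst hR
    exact ⟨hμ, hμ', hμ'sub, rfl, hRconn, hRinj⟩
  have hSrib : IsRemovableSingleRibbon μ' ν S.ncard := by
    subst hS
    exact ⟨hμ', hν, hνsub, rfl, hSconn, hSinj⟩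
  have hq := (Set.ncard_pos hSfin).2 hSne
  obtain ⟨hμeq, hpμ'⟩ := hRrib.eq_insert_of_diag_mem ((Set.ncard_pos hRfin).2 hRne) (hR ▸ haR)
  obtain ⟨rfl, hqν⟩ := hSrib.eq_insert_of_diag_mem hq (hS ▸ hbS)
  have hqp : S.ncard ≠ R.ncard := fun heq => hpμ' (heq ▸ Finset.mem_insert_self _ ν)
  exact ⟨_, _, hq, lt_of_le_of_ne hSR hqp, hcard, hqν, hpμ', hμeq⟩

lemma IsRemovableDoubleRibbon.kLength_eq {μ ν : Finset ℕ} {k : ℕ}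
    (h : IsRemovableDoubleRibbon μ ν k) : kLength k μ = kLength k ν + 1 := by
  obtain ⟨hcard, R, S, hRS⟩ := h
  obtain ⟨p, q, hq, hqp, hpq, hqν, hpν, rfl⟩ := hRS.exists_eq_insert_insert
  exact kLength_insert_insert hqν hpν hq hqp (hpq.trans hcard)

lemma IsRemovableDoubleRibbon.exists_diag_mem {μ ν : Finset ℕ} {k : ℕ}
    (h : IsRemovableDoubleRibbon μ ν k) : ∃ j, (j, j) ∈ skewDiag μ ν := by
  obtain ⟨-, R, S, -, -, -, -, hunion, -, -, -, -, -, -, -, ⟨a, haR, -⟩, -⟩ := h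
  exact ⟨a, hunion ▸ Or.inl haR⟩

open Classical in
lemma IsRemovableRibbon.kLength_eq {μ ν : Finset ℕ} {k : ℕ} (hk : 1 ≤ k)
    (h : IsRemovableRibbon μ ν k) :
    kLength k μ = kLength k ν + if ∃ j, (j, j) ∈ skewDiag μ ν then 1 else 0 := by
  rcases h with h | h
  · exact h.kLength_eq hk
  · rw [if_pos h.exists_diag_mem, h.kLength_eq]

lemma isRemovableDoubleRibbon_erase_erase {μ : Finset ℕ} (hμ : IsStrictPartition μ) {p q : ℕ}
    (hp : p ∈ μ) (hq : q ∈ μ) (hq₀ : 0 < q) (hqp : q < p) :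
    IsRemovableDoubleRibbon μ ((μ.erase p).erase q) (p + q) := by
  have hR := lowersPart_erase hp (hq₀.trans hqp)
  have hS := lowersPart_erase (Finset.mem_erase.2 ⟨hqp.ne, hq⟩) hq₀
  obtain ⟨-, -, hRsub, hRcard, hRconn, hRinj⟩ := hR.isRemovableSingleRibbon hμ (hμ.erase p)
  obtain ⟨-, -, hSsub, hScard, hSconn, hSinj⟩ :=
    hS.isRemovableSingleRibbon (hμ.erase p) ((hμ.erase p).erase q)
  have hdisj : Disjoint (skewDiag μ (μ.erase p)) (skewDiag (μ.erase p) ((μ.erase p).erase q)) :=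
    Set.disjoint_sdiff_left.mono_right Set.sdiff_subset
  have hunion := Set.sdiff_union_sdiff_cancel hRsub hSsub
  refine ⟨?_, _, _, hμ, (hμ.erase p).erase q, hSsub.trans hRsub, hdisj, hunion,
    Set.nonempty_of_ncard_ne_zero (by omega), hRconn, hRinj,
    Set.nonempty_of_ncard_ne_zero (by omega), hSconn, hSinj, by omega,
    ⟨_, hR.isTail_skewDiag⟩, ⟨_, hS.isTail_skewDiag⟩,
    μ.erase p, hμ.erase p, (Set.sdiff_sdiff_cancel_left hRsub).symm⟩
  rw [skewDiag, ← hunion, ← skewDiag, ← skewDiag, Set.ncard_union_eq hdisj (skewDiag_finite _ _) (skewDiag_finite _ _), hRcard,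
    hScard]
  omega

lemma exists_mem_le_mod_eq {c : Finset ℕ} (hc : IsStrictPartition c) {k : ℕ} (hk : 0 < k)
    (hsub : ∀ a ∈ c, k < a → a - k ∈ c) {a : ℕ} (ha : a ∈ c) : ∃ e ∈ c, e ≤ k ∧ e % k = a % k := by
  induction a using Nat.strong_induction_on with
  | _ a ih =>
    by_cases hak : a ≤ k
    · exact ⟨a, ha, hak, rfl⟩
    · obtain ⟨e, he, hek, hmod⟩ := ih (a - k) (by have := hc a ha; omega) (hsub a ha (by omega))
      refine ⟨e, he, hek, ?_⟩
      rw [hmod, ← Nat.add_mod_right, Nat.sub_add_cancel (by omega)]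

lemma kLength_eq_zero_of_isCore {c : Finset ℕ} {k : ℕ} (hk : 1 ≤ k) (hc : IsStrictPartition c)
    (hcore : ¬∃ ν, IsRemovableRibbon c ν k) : kLength k c = 0 := by
  have hsub : ∀ a ∈ c, k < a → a - k ∈ c := fun a ha hka => by
    by_contra hb
    have hrib := (lowersPart_insert_erase ha hb (by omega)).isRemovableSingleRibbon hc
      ((hc.erase a).insert (by omega))
    rw [Nat.sub_sub_self hka.le] at hrib
    exact hcore ⟨_, Or.inl hrib⟩
  have hkc : k ∉ c := fun hkc => hcore ⟨_, Or.inl (by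
    simpa using (lowersPart_erase hkc hk).isRemovableSingleRibbon hc (hc.erase k))⟩
  have hsmall : ∀ j, 0 < j → j < k → residueCount k c j ≠ 0 → j ∈ c := fun j hj hjk hcount => by
    obtain ⟨a, ha⟩ := Finset.card_pos.mp (Nat.pos_of_ne_zero hcount)
    rw [Finset.mem_filter] at ha
    obtain ⟨e, he, hek, hmod⟩ := exists_mem_le_mod_eq hc hk hsub ha.1
    rcases hek.lt_or_eq with hek | rfl
    · rwa [← ha.2, ← hmod, Nat.mod_eq_of_lt hek]
    · rw [Nat.mod_self] at hmod
      omega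
  have hzero : residueCount k c 0 = 0 := Finset.card_eq_zero.2 <|
    Finset.filter_eq_empty_iff.2 fun a ha hmod => by
      obtain ⟨e, he, hek, hemod⟩ := exists_mem_le_mod_eq hc hk hsub ha
      have := hc e he
      obtain rfl : e = k := by
        by_contra hne
        rw [Nat.mod_eq_of_lt (by omega)] at hemod
        omega
      exact hkc he
  have hmin : ∀ i ∈ (Finset.Ico 1 k).filter (fun i => 2 * i < k),
      min (residueCount k c i) (residueCount k c (k - i)) = 0 := fun i hi => by
    simp only [Finset.mem_filter, Finset.mem_Ico] at hi
    by_contra hne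
    have hrib := isRemovableDoubleRibbon_erase_erase hc
      (hsmall (k - i) (by omega) (by omega) (by omega)) (hsmall i (by omega) (by omega) (by omega))
      (by omega) (by omega)
    rw [Nat.sub_add_cancel (by omega)] at hrib
    exact hcore ⟨_, Or.inr hrib⟩
  rw [kLength, hzero, Finset.sum_eq_zero hmin]
  rfl

open Classical in
lemma kLength_eq_add_card_diag {k : ℕ} (hk : 1 ≤ k) (f : ℕ → Finset ℕ) (n : ℕ)
    (hsteps : ∀ i < n, IsRemovableRibbon (f (i + 1)) (f i) k) :
    kLength k (f n) = kLength k (f 0) +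
      ((Finset.range n).filter fun i => ∃ j, (j, j) ∈ skewDiag (f (i + 1)) (f i)).card := by
  induction n with
  | zero => simp
  | succ n ih =>
    rw [(hsteps n n.lt_add_one).kLength_eq hk, ih fun i hi => hsteps i (by omega),
      Finset.range_add_one, Finset.filter_insert]
    split_ifs
    · rw [Finset.card_insert_of_notMem (by simp)]
      omega
    · rfl

theorem stmt6_general (k : ℕ) (hk : 1 ≤ k) (lam : Finset ℕ)
    (n : ℕ) (f : ℕ → Finset ℕ) (hT : IsStandardRibbonTableau k lam n f) :
    {i : ℕ | i < n ∧ ∃ j : ℕ, (j, j) ∈ skewDiag (f (i + 1)) (f i)}.ncard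
      = (lam.filter (fun p => p % k = 0)).card
        + ∑ i ∈ (Finset.Ico 1 k).filter (fun i => 2 * i < k),
            min ((lam.filter (fun p => p % k = i)).card)
                ((lam.filter (fun p => p % k = k - i)).card) := by
  classical
  obtain ⟨hcore_strict, hcore, rfl, hsteps⟩ := hT
  have htel := kLength_eq_add_card_diag hk f n hsteps
  rw [kLength_eq_zero_of_isCore hk hcore_strict hcore, zero_add] at htel
  have hset : {i : ℕ | i < n ∧ ∃ j : ℕ, (j, j) ∈ skewDiag (f (i + 1)) (f i)} =
      ((Finset.range n).filter fun i => ∃ j, (j, j) ∈ skewDiag (f (i + 1)) (f i) : Finset ℕ) := by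
    ext i
    simp
  rw [hset, Set.ncard_coe_finset, ← htel]
  rfl

/-- Every standard shifted `k`-ribbon tableau of shape `λ` has the same
number of ribbons meeting the main diagonal, namely
`m₀ + ∑_{1 ≤ i < k/2} min (mᵢ, m_{k-i})` where `m_j` is the number of parts of `λ`
congruent to `j` mod `k`. -/
theorem stmt6 (k : ℕ) (hk : 1 ≤ k) (lam : Finset ℕ) (hlam : IsStrictPartition lam)
    (n : ℕ) (f : ℕ → Finset ℕ) (hT : IsStandardRibbonTableau k lam n f) :
    {i : ℕ | i < n ∧ ∃ j : ℕ, (j, j) ∈ skewDiag (f (i + 1)) (f i)}.ncard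
      = (lam.filter (fun p => p % k = 0)).card
        + ∑ i ∈ (Finset.Ico 1 k).filter (fun i => 2 * i < k),
            min ((lam.filter (fun p => p % k = i)).card)
                ((lam.filter (fun p => p % k = k - i)).card) :=
  stmt6_general k hk lam n f hT
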